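/- For all n ≥ 0, F(2n+6; 0, n) = (2n+2)!/(3·n!·(n+4)!) · (64n⁴ + 672n³ + 2648n² + 4641n + 3060), where F counts Gessel walks of length 2n+6 from the origin to (0, n). -/

import Mathlib

open Finset

/-- The four Gessel steps: W, E, NE, SW. -/
def gstep : Fin 4 → ℤ × ℤ
  | 0 => (-1, 0)
  | 1 => (1, 0)
  | 2 => (1, 1)
  | 3 => (-1, -1)

/-- Position of the walk `w` after `j` steps. -/
def wpos (m : ℕ) (w : Fin m → Fin 4) (j : ℕ) : ℤ × ℤ :=
  ∑ i : Fin m, if (i : ℕ) < j then gstep (w i) else 0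

/-- `gesselF m n1 n2` : number of Gessel walks of length `m` from the origin to `(n1, n2)`
staying in the first quadrant. -/
noncomputable def gesselF (m : ℕ) (n1 n2 : ℤ) : ℕ :=
  Nat.card {w : Fin m → Fin 4 //
    (∀ j, 1 ≤ j → j ≤ m → 0 ≤ (wpos m w j).1 ∧ 0 ≤ (wpos m w j).2) ∧
    wpos m w m = (n1, n2)}

/-- Partial sum of a `±1` sequence. -/
def pSum (m : ℕ) (f : Fin m → ℤ) (j : ℕ) : ℤ :=
  ∑ i : Fin m, if (i : ℕ) < j then f i else 0


lemma wpos_zero (m : ℕ) (w : Fin m → Fin 4) : wpos m w 0 = 0 := by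
  simp [wpos]

lemma gesselF_base (x y : ℤ) : gesselF 0 x y = if x = 0 ∧ y = 0 then 1 else 0 := by
  unfold gesselF
  by_cases h : x = 0 ∧ y = 0
  · obtain ⟨rfl, rfl⟩ := h
    rw [if_pos ⟨rfl, rfl⟩, Nat.card_eq_one_iff_unique]
    constructor
    · infer_instance
    · refine ⟨⟨fun i => i.elim0, ?_, ?_⟩⟩
      · intro j hj hjm; omega
      · rw [wpos_zero]; rfl
  · rw [if_neg h, Nat.card_eq_zero]
    left
    refine ⟨?_⟩
    rintro ⟨w, hw1, hw2⟩
    rw [wpos_zero] at hw2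
    exact h ⟨(congrArg Prod.fst hw2).symm, (congrArg Prod.snd hw2).symm⟩

lemma gesselF_neg (m : ℕ) (x y : ℤ) (h : x < 0 ∨ y < 0) : gesselF m x y = 0 := by
  have hne : ¬ (x = 0 ∧ y = 0) := by rintro ⟨rfl, rfl⟩; omega
  cases m with
  | zero => rw [gesselF_base, if_neg hne]
  | succ k =>
    unfold gesselF
    rw [Nat.card_eq_zero]
    left
    refine ⟨?_⟩
    rintro ⟨w, hw1, hw2⟩
    have h2 := hw1 (k+1) (by omega) le_rfl
    rw [hw2] at h2
    rcases h with h | h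
    · exact absurd h2.1 (by simp; omega)
    · exact absurd h2.2 (by simp; omega)

lemma wpos_init (m : ℕ) (w : Fin (m+1) → Fin 4) (j : ℕ) (hj : j ≤ m) :
    wpos (m+1) w j = wpos m (Fin.init w) j := by
  unfold wpos Fin.init
  rw [Fin.sum_univ_castSucc]
  simp only [Fin.coe_castSucc, Fin.val_last]
  rw [if_neg (by omega)]
  simp

lemma wpos_last (m : ℕ) (w : Fin (m+1) → Fin 4) :
    wpos (m+1) w (m+1) = wpos m (Fin.init w) m + gstep (w (Fin.last m)) := by
  unfold wpos Fin.init
  rw [Fin.sum_univ_castSucc]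
  simp only [Fin.coe_castSucc, Fin.val_last]
  rw [if_pos (by omega)]
  congr 1
  apply Finset.sum_congr rfl
  intro i _
  rw [if_pos (by omega), if_pos i.isLt]

lemma gesselF_rec (m : ℕ) (x y : ℤ) (hx : 0 ≤ x) (hy : 0 ≤ y) :
    gesselF (m+1) x y =
      gesselF m (x+1) y + gesselF m (x-1) y + gesselF m (x-1) (y-1) +
        gesselF m (x+1) (y+1) := by
  classical
  have key : gesselF (m+1) x y = ∑ s : Fin 4, gesselF m (x - (gstep s).1) (y - (gstep s).2) := by
    unfold gesselF
    set P : (Fin (m+1) → Fin 4) → Prop := fun w =>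
      (∀ j, 1 ≤ j → j ≤ m+1 → 0 ≤ (wpos (m+1) w j).1 ∧ 0 ≤ (wpos (m+1) w j).2) ∧
      wpos (m+1) w (m+1) = (x, y) with hP
    set Q : (s : Fin 4) → (Fin m → Fin 4) → Prop := fun s v =>
      (∀ j, 1 ≤ j → j ≤ m → 0 ≤ (wpos m v j).1 ∧ 0 ≤ (wpos m v j).2) ∧
      wpos m v m = (x - (gstep s).1, y - (gstep s).2) with hQ
    have e : {w : Fin (m+1) → Fin 4 // P w} ≃ (s : Fin 4) × {v : Fin m → Fin 4 // Q s v} := by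
      refine Equiv.trans (Equiv.sigmaFiberEquiv (fun w : {w // P w} => w.1 (Fin.last m))).symm
        (Equiv.sigmaCongrRight fun s => ?_)
      refine ⟨fun u => ⟨Fin.init u.1.1, ?_, ?_⟩, fun v => ⟨⟨Fin.snoc v.1 s, ?_, ?_⟩, by simp⟩, ?_, ?_⟩
      · intro j hj hjm
        have := u.1.2.1 j hj (by omega)
        rwa [wpos_init m u.1.1 j hjm] at this
      · have h2 := u.1.2.2
        rw [wpos_last] at h2
        have h3 := eq_sub_of_add_eq h2
        rw [h3, u.2]
        rfl
      · intro j hj hjm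
        rcases Nat.lt_or_ge j (m+1) with hlt | hge
        · rw [wpos_init m _ j (by omega), Fin.init_snoc]
          exact v.2.1 j hj (by omega)
        · have : j = m+1 := by omega
          subst this
          rw [wpos_last, Fin.init_snoc, Fin.snoc_last, v.2.2]
          constructor
          · simp only [Prod.fst_add, Prod.fst_sub]; omega
          · simp only [Prod.snd_add, Prod.snd_sub]; omega
      · rw [wpos_last, Fin.init_snoc, Fin.snoc_last, v.2.2]
        ext <;> simp
      · rintro ⟨⟨w, hw⟩, hws⟩
        refine Subtype.ext (Subtype.ext ?_)
        simp only at hws ⊢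
        rw [← hws]
        exact Fin.snoc_init_self w
      · intro v
        refine Subtype.ext ?_
        simp [Fin.init_snoc]
    rw [Nat.card_congr e]
    have : ∀ s : Fin 4, Fintype {v : Fin m → Fin 4 // Q s v} := fun s => Subtype.fintype _
    rw [Nat.card_eq_fintype_card, Fintype.card_sigma]
    apply Finset.sum_congr rfl
    intro s _
    rw [Nat.card_eq_fintype_card]
  rw [key, Fin.sum_univ_four]
  have g0 : gstep 0 = (-1, 0) := rfl
  have g1 : gstep 1 = (1, 0) := rfl
  have g2 : gstep 2 = (1, 1) := rfl
  have g3 : gstep 3 = (-1, -1) := rfl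
  rw [g0, g1, g2, g3]
  norm_num

lemma gesselF_big (m : ℕ) : ∀ (x y : ℤ), (m:ℤ) < x → gesselF m x y = 0 := by
  induction m with
  | zero =>
    intro x y hx
    rw [gesselF_base, if_neg (by rintro ⟨rfl, rfl⟩; norm_num at hx)]
  | succ k IH =>
    intro x y hx
    rcases le_or_gt 0 y with hy | hy
    · rw [gesselF_rec k x y (by push_cast at hx; omega) hy]
      rw [IH (x+1) y (by push_cast at hx ⊢; omega),
        IH (x-1) y (by push_cast at hx ⊢; omega),
        IH (x-1) (y-1) (by push_cast at hx ⊢; omega),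
        IH (x+1) (y+1) (by push_cast at hx ⊢; omega)]
    · exact gesselF_neg _ x y (Or.inr hy)

lemma gesselF_parity (m : ℕ) : ∀ x y : ℤ, ¬ (2 ∣ ((m:ℤ) + x)) → gesselF m x y = 0 := by
  induction m with
  | zero =>
    intro x y hx
    rw [gesselF_base, if_neg (by rintro ⟨rfl, rfl⟩; norm_num at hx)]
  | succ k IH =>
    intro x y hx
    rcases lt_or_ge x 0 with h | h
    · exact gesselF_neg _ x y (Or.inl h)
    rcases lt_or_ge y 0 with h' | h'
    · exact gesselF_neg _ x y (Or.inr h')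
    rw [gesselF_rec k x y h h']
    rw [IH (x+1) y (by push_cast at hx ⊢; omega),
      IH (x-1) y (by push_cast at hx ⊢; omega),
      IH (x-1) (y-1) (by push_cast at hx ⊢; omega),
      IH (x+1) (y+1) (by push_cast at hx ⊢; omega)]

lemma gesselF_low (m : ℕ) : ∀ x y : ℤ, (m:ℤ) + x < 2*y → gesselF m x y = 0 := by
  induction m with
  | zero =>
    intro x y hx
    rw [gesselF_base, if_neg (by rintro ⟨rfl, rfl⟩; norm_num at hx)]
  | succ k IH =>
    intro x y hx
    rcases lt_or_ge x 0 with h | h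
    · exact gesselF_neg _ x y (Or.inl h)
    rcases lt_or_ge y 0 with h' | h'
    · exact gesselF_neg _ x y (Or.inr h')
    rw [gesselF_rec k x y h h']
    rw [IH (x+1) y (by push_cast at hx ⊢; omega),
      IH (x-1) y (by push_cast at hx ⊢; omega),
      IH (x-1) (y-1) (by push_cast at hx ⊢; omega),
      IH (x+1) (y+1) (by push_cast at hx ⊢; omega)]

def Qu1 (x y : ℚ) : ℚ := 2 + 2*y + x + 2*x*y - x^2

def Qu2 (x y : ℚ) : ℚ :=
  66 + 163*y + 145*y^2 + 56*y^3 + 8*y^4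
  + x*(-15 + 18*y + 61*y^2 + 40*y^3 + 8*y^4)
  + x^2*(-89/2 - 103*y - 72*y^2 - 16*y^3)
  + x^3*(59/2 + 38*y + 12*y^2)
  + x^4*(-13/2 - 4*y) + x^5/2

def Qu3 (x y : ℚ) : ℚ :=
  6120 + 20502*y + 28433*y^2 + (64066/3)*y^3 + 9435*y^4 + (7384/3)*y^5 + 352*y^6 + (64/3)*y^7
  + x*(-4056 - 7854*y - 3571*y^2 + (7468/3)*y^3 + (9845/3)*y^4 + (4216/3)*y^5 + (832/3)*y^6 + (64/3)*y^7)
  + x^2*(-3070 - 12330*y - 17843*y^2 - (38132/3)*y^3 - (14500/3)*y^4 - 944*y^5 - (224/3)*y^6)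
  + x^3*((13270/3) + 11297*y + (33244/3)*y^2 + (15826/3)*y^3 + (3680/3)*y^4 + 112*y^5)
  + x^4*(-(12541/6) - (11875/3)*y - (8249/3)*y^2 - (2500/3)*y^3 - (280/3)*y^4)
  + x^5*((1546/3) + (2114/3)*y + 316*y^2 + (140/3)*y^3)
  + x^6*(-(215/3) - (191/3)*y - 14*y^2)
  + x^7*((16/3) + (7/3)*y) - x^8/6

lemma rec11 (k a b : ℕ) : gesselF (k+1) ((a:ℤ)+1) ((b:ℤ)+1) =
    gesselF k ((a:ℤ)+2) ((b:ℤ)+1) + gesselF k (a:ℤ) ((b:ℤ)+1) +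
    gesselF k (a:ℤ) (b:ℤ) + gesselF k ((a:ℤ)+2) ((b:ℤ)+2) := by
  have h := gesselF_rec k ((a:ℤ)+1) ((b:ℤ)+1) (by positivity) (by positivity)
  norm_num at h
  convert h using 2
  all_goals ring_nf

lemma rec01 (k b : ℕ) : gesselF (k+1) 0 ((b:ℤ)+1) =
    gesselF k 1 ((b:ℤ)+1) + gesselF k 1 ((b:ℤ)+2) := by
  have h := gesselF_rec k 0 ((b:ℤ)+1) le_rfl (by positivity)
  norm_num at h
  rw [h, gesselF_neg k (-1) _ (by norm_num), gesselF_neg k (-1) _ (by norm_num)]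
  ring

lemma rec10 (k a : ℕ) : gesselF (k+1) ((a:ℤ)+1) 0 =
    gesselF k ((a:ℤ)+2) 0 + gesselF k (a:ℤ) 0 + gesselF k ((a:ℤ)+2) 1 := by
  have h := gesselF_rec k ((a:ℤ)+1) 0 (by positivity) le_rfl
  norm_num at h
  rw [h, gesselF_neg k _ (-1) (by norm_num)]
  ring_nf

lemma rec00 (k : ℕ) : gesselF (k+1) 0 0 = gesselF k 1 0 + gesselF k 1 1 := by
  have h := gesselF_rec k 0 0 le_rfl le_rfl
  norm_num at h
  rw [h, gesselF_neg k (-1) 0 (by norm_num), gesselF_neg k (-1) (-1) (by norm_num)]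
  ring

lemma fact1 (n : ℕ) : ((n+1).factorial : ℚ) = (n+1) * n.factorial := by
  push_cast [Nat.factorial_succ]; ring
lemma fact2 (n : ℕ) : ((n+2).factorial : ℚ) = (n+2)*(n+1) * n.factorial := by
  simp only [show n+2 = (n+1)+1 from rfl, fact1, fact1]; push_cast; ring
lemma fact3 (n : ℕ) : ((n+3).factorial : ℚ) = (n+3)*(n+2)*(n+1) * n.factorial := by
  simp only [show n+3 = (n+2)+1 from rfl, fact1, fact2]; push_cast; ring
lemma fact4 (n : ℕ) : ((n+4).factorial : ℚ) = (n+4)*(n+3)*(n+2)*(n+1) * n.factorial := by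
  simp only [show n+4 = (n+3)+1 from rfl, fact1, fact3]; push_cast; ring
lemma fact5 (n : ℕ) : ((n+5).factorial : ℚ) = (n+5)*(n+4)*(n+3)*(n+2)*(n+1) * n.factorial := by
  simp only [show n+5 = (n+4)+1 from rfl, fact1, fact4]; push_cast; ring
lemma fact6 (n : ℕ) : ((n+6).factorial : ℚ) = (n+6)*(n+5)*(n+4)*(n+3)*(n+2)*(n+1) * n.factorial := by
  simp only [show n+6 = (n+5)+1 from rfl, fact1, fact5]; push_cast; ring
lemma factne (n : ℕ) : (n.factorial : ℚ) ≠ 0 :=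
  Nat.cast_ne_zero.mpr (Nat.factorial_ne_zero n)

lemma small110 : gesselF 1 1 0 = 1 := by
  have h := rec10 0 0
  norm_num at h
  rw [h, gesselF_base, gesselF_base, gesselF_base]
  norm_num

lemma small220 : gesselF 2 2 0 = 1 := by
  have h := rec10 1 1
  norm_num at h
  rw [h, gesselF_big 1 3 0 (by norm_num), gesselF_big 1 3 1 (by norm_num), small110]

lemma small330 : gesselF 3 3 0 = 1 := by
  have h := rec10 2 2
  norm_num at h
  rw [h, gesselF_big 2 4 0 (by norm_num), gesselF_big 2 4 1 (by norm_num), small220]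

set_option maxHeartbeats 2000000 in
theorem gessel_master (m : ℕ) :
    (∀ x y q : ℕ, x + q = y → m = y + q →
      (gesselF m x y : ℚ) = (x+1) * ((y+q).factorial : ℚ) / ((y+1).factorial * q.factorial)) ∧
    (∀ x y q : ℕ, x + q = y + 1 → m = y + 1 + q →
      (gesselF m x y : ℚ) = Qu1 x y * ((y+q+1).factorial : ℚ) / ((y+2).factorial * q.factorial)) ∧
    (∀ x y q : ℕ, x + q = y + 2 → m = y + 2 + q →
      (gesselF m x y : ℚ) = Qu2 x y * ((y+q).factorial : ℚ) / ((y+3).factorial * q.factorial)) ∧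
    (∀ x y q r : ℕ, x + q = y + 3 → m = y + 3 + q → y + q = r + 1 →
      (gesselF m x y : ℚ) = Qu3 x y * (r.factorial : ℚ) / ((y+4).factorial * q.factorial)) := by
  induction m using Nat.strong_induction_on with
  | _ m IH =>
  rcases m with _ | k
  · refine ⟨?_, ?_, ?_, ?_⟩
    · intro x y q h1 h2
      obtain rfl : y = 0 := by omega
      obtain rfl : q = 0 := by omega
      obtain rfl : x = 0 := by omega
      push_cast
      rw [gesselF_base]
      norm_num [Nat.factorial]
    · intro x y q h1 h2; omega
    · intro x y q h1 h2; omega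
    · intro x y q r h1 h2 h3; omega
  refine ⟨?_, ?_, ?_, ?_⟩
  · -- C0
    intro x y q h1 h2
    rcases x with _ | a
    · -- x = 0, q = y = b+1
      obtain ⟨b, rfl⟩ : ∃ b, y = b + 1 := ⟨y - 1, by omega⟩
      obtain rfl : q = b + 1 := by omega
      have hW := (IH k (by omega)).1 1 (b+1) b (by omega) (by omega)
      push_cast at hW
      have hSW : gesselF k 1 ((b:ℤ)+2) = 0 := gesselF_low k 1 ((b:ℤ)+2) (by omega)
      push_cast
      rw [rec01 k b]
      push_cast
      rw [hW, hSW]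
      simp only [show (b+1)+(b+1) = (b+b)+2 from by omega, show (b+1)+b = (b+b)+1 from by omega,
          show (b+1)+1 = b+2 from rfl]
      field_simp [factne]
      simp only [fact2 (b+b), fact1 (b+b), fact2 b, fact1 b]
      push_cast
      ring
    · rcases q with _ | c
      · -- q = 0, x = y = a+1
        obtain rfl : y = a + 1 := by omega
        have hW : gesselF k ((a:ℤ)+2) ((a:ℤ)+1) = 0 := gesselF_big k ((a:ℤ)+2) ((a:ℤ)+1) (by omega)
        have hE : gesselF k (a:ℤ) ((a:ℤ)+1) = 0 := gesselF_low k (a:ℤ) ((a:ℤ)+1) (by omega)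
        have hNE := (IH k (by omega)).1 a a 0 (by omega) (by omega)
        push_cast at hNE
        have hSW : gesselF k ((a:ℤ)+2) ((a:ℤ)+2) = 0 := gesselF_low k ((a:ℤ)+2) ((a:ℤ)+2) (by omega)
        push_cast
        rw [rec11 k a a]
        push_cast
        rw [hW, hE, hNE, hSW]
        simp only [show (a+1)+0 = a+1 from by omega, show a+0 = a from by omega,
            show (a+1)+1 = a+2 from rfl]
        field_simp [factne]
        simp only [fact1 a, fact2 a]
        push_cast
        ring
      · -- generic: x = a+1, q = c+1, y = b+1, a+c = b
        obtain ⟨b, rfl⟩ : ∃ b, y = b + 1 := ⟨y - 1, by omega⟩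
        have hW := (IH k (by omega)).1 (a+2) (b+1) c (by omega) (by omega)
        push_cast at hW
        have hE : gesselF k (a:ℤ) ((b:ℤ)+1) = 0 := gesselF_low k (a:ℤ) ((b:ℤ)+1) (by omega)
        have hNE := (IH k (by omega)).1 a b (c+1) (by omega) (by omega)
        push_cast at hNE
        have hSW : gesselF k ((a:ℤ)+2) ((b:ℤ)+2) = 0 := gesselF_low k ((a:ℤ)+2) ((b:ℤ)+2) (by omega)
        push_cast
        rw [rec11 k a b]
        push_cast
        rw [hW, hE, hNE, hSW]
        have hA : (a:ℚ) = (b:ℚ) - c - 1 := by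
          have h' : a + c + 1 = b := by omega
          have := congrArg (Nat.cast (R := ℚ)) h'
          push_cast at this
          linarith
        simp only [show (b+1)+(c+1) = (b+c)+2 from by omega, show (b+1)+c = (b+c)+1 from by omega,
            show b+(c+1) = (b+c)+1 from by omega, show (b+1)+1 = b+2 from rfl]
        field_simp [factne]
        simp only [fact2 (b+c), fact1 (b+c), fact2 b, fact1 b, fact1 c]
        push_cast
        rw [hA]
        ring
  · -- C1
    intro x y q h1 h2
    rcases y with _ | b
    · -- y = 0 : concrete
      have hx : x ≤ 1 := by omega
      interval_cases x
      · -- x=0, q=1, k=1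
        obtain rfl : q = 1 := by omega
        obtain rfl : k = 1 := by omega
        have hr := rec00 1
        have hv1 := (IH 1 (by omega)).2.1 1 0 0 (by norm_num) (by norm_num)
        norm_num [Qu1, Nat.factorial] at hv1
        have hv2 := (IH 1 (by omega)).1 1 1 0 (by norm_num) (by norm_num)
        norm_num [Nat.factorial] at hv2
        push_cast
        rw [hr]
        push_cast
        rw [hv1, hv2]
        norm_num [Qu1, Nat.factorial]
      · -- x=1, q=0, k=0
        obtain rfl : q = 0 := by omega
        obtain rfl : k = 0 := by omega
        have hr := rec10 0 0
        norm_num at hr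
        push_cast
        rw [hr, gesselF_base, gesselF_base, gesselF_base]
        norm_num [Qu1, Nat.factorial]
    · rcases x with _ | a
      · -- x = 0, q = b+2
        obtain rfl : q = b + 2 := by omega
        have hW := (IH k (by omega)).2.1 1 (b+1) (b+1) (by omega) (by omega)
        push_cast at hW
        have hSW := (IH k (by omega)).1 1 (b+2) (b+1) (by omega) (by omega)
        push_cast at hSW
        push_cast
        rw [rec01 k b]
        push_cast
        rw [hW, hSW]
        simp only [Qu1]
        simp only [show (b+1)+(b+2)+1 = (b+b)+4 from by omega, show (b+1)+(b+1)+1 = (b+b)+3 from by omega,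
            show (b+2)+(b+1) = (b+b)+3 from by omega, show (b+1)+2 = b+3 from rfl,
            show (b+2)+1 = b+3 from by omega]
        field_simp [factne]
        simp only [fact4 (b+b), fact3 (b+b), fact3 b, fact2 b, fact1 b]
        push_cast
        ring
      · rcases q with _ | c
        · -- q = 0, x = a+1 = b+2
          have hW : gesselF k ((a:ℤ)+2) ((b:ℤ)+1) = 0 := gesselF_big k ((a:ℤ)+2) ((b:ℤ)+1) (by omega)
          have hE := (IH k (by omega)).1 a (b+1) 0 (by omega) (by omega)
          push_cast at hE
          have hNE := (IH k (by omega)).2.1 a b 0 (by omega) (by omega)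
          push_cast at hNE
          have hSW : gesselF k ((a:ℤ)+2) ((b:ℤ)+2) = 0 := gesselF_big k ((a:ℤ)+2) ((b:ℤ)+2) (by omega)
          push_cast
          rw [rec11 k a b]
          push_cast
          rw [hW, hE, hNE, hSW]
          have hA : (a:ℚ) = (b:ℚ) + 1 := by
            have h' : a = b + 1 := by omega
            exact_mod_cast congrArg (Nat.cast (R := ℚ)) h'
          simp only [Qu1]
          simp only [show (b+1)+0+1 = b+2 from by omega, show (b+1)+2 = b+3 from rfl,
              show (b+1)+0 = b+1 from by omega, show (b+1)+1 = b+2 from rfl,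
              show b+0+1 = b+1 from by omega, Nat.factorial_zero]
          field_simp [factne]
          simp only [fact3 b, fact2 b, fact1 b]
          push_cast
          rw [hA]
          ring
        · -- generic x = a+1, q = c+1, a + c = b
          have hW := (IH k (by omega)).2.1 (a+2) (b+1) c (by omega) (by omega)
          push_cast at hW
          have hE := (IH k (by omega)).1 a (b+1) (c+1) (by omega) (by omega)
          push_cast at hE
          have hNE := (IH k (by omega)).2.1 a b (c+1) (by omega) (by omega)
          push_cast at hNE
          have hSW := (IH k (by omega)).1 (a+2) (b+2) c (by omega) (by omega)
          push_cast at hSW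
          push_cast
          rw [rec11 k a b]
          push_cast
          rw [hW, hE, hNE, hSW]
          have hA : (a:ℚ) = (b:ℚ) - c := by
            have h' : a + c = b := by omega
            have := congrArg (Nat.cast (R := ℚ)) h'
            push_cast at this
            linarith
          simp only [Qu1]
          simp only [show (b+1)+(c+1)+1 = (b+c)+3 from by omega, show (b+1)+c+1 = (b+c)+2 from by omega,
              show (b+1)+(c+1) = (b+c)+2 from by omega, show b+(c+1)+1 = (b+c)+2 from by omega,
              show (b+2)+c = (b+c)+2 from by omega, show (b+1)+2 = b+3 from rfl,
              show (b+1)+1 = b+2 from rfl, show (b+2)+1 = b+3 from by omega]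
          field_simp [factne]
          simp only [fact3 (b+c), fact2 (b+c), fact3 b, fact2 b, fact1 c]
          push_cast
          rw [hA]
          ring
  · -- C2
    intro x y q h1 h2
    rcases y with _ | b
    · -- y = 0 : concrete
      have hx : x ≤ 2 := by omega
      interval_cases x
      · -- x=0, q=2, k=3
        obtain rfl : q = 2 := by omega
        obtain rfl : k = 3 := by omega
        have hr := rec00 3
        have hv1 := (IH 3 (by omega)).2.2.1 1 0 1 (by norm_num) (by norm_num)
        norm_num [Qu2, Nat.factorial] at hv1
        have hv2 := (IH 3 (by omega)).2.1 1 1 1 (by norm_num) (by norm_num)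
        norm_num [Qu1, Nat.factorial] at hv2
        push_cast
        rw [hr]
        push_cast
        rw [hv1, hv2]
        norm_num [Qu2, Nat.factorial]
      · -- x=1, q=1, k=2
        obtain rfl : q = 1 := by omega
        obtain rfl : k = 2 := by omega
        have hr := rec10 2 0
        norm_num at hr
        have hv1 := (IH 2 (by omega)).2.2.1 2 0 0 (by norm_num) (by norm_num)
        norm_num [Qu2, Nat.factorial] at hv1
        have hv2 := (IH 2 (by omega)).2.1 0 0 1 (by norm_num) (by norm_num)
        norm_num [Qu1, Nat.factorial] at hv2
        have hv3 := (IH 2 (by omega)).2.1 2 1 0 (by norm_num) (by norm_num)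
        norm_num [Qu1, Nat.factorial] at hv3
        push_cast
        rw [hr]
        push_cast
        rw [hv1, hv2, hv3]
        norm_num [Qu2, Nat.factorial]
      · -- x=2, q=0, k=1
        obtain rfl : q = 0 := by omega
        obtain rfl : k = 1 := by omega
        have hr := rec10 1 1
        norm_num at hr
        push_cast
        rw [hr, gesselF_big 1 3 0 (by norm_num), gesselF_big 1 3 1 (by norm_num), small110]
        norm_num [Qu2, Nat.factorial]
    · rcases x with _ | a
      · -- x = 0, q = b+3
        obtain rfl : q = b + 3 := by omega
        have hW := (IH k (by omega)).2.2.1 1 (b+1) (b+2) (by omega) (by omega)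
        push_cast at hW
        have hSW := (IH k (by omega)).2.1 1 (b+2) (b+2) (by omega) (by omega)
        push_cast at hSW
        push_cast
        rw [rec01 k b]
        push_cast
        rw [hW, hSW]
        simp only [Qu1, Qu2]
        simp only [show (b+1)+(b+3) = (b+b)+4 from by omega, show (b+1)+(b+2) = (b+b)+3 from by omega,
            show (b+2)+(b+2)+1 = (b+b)+5 from by omega, show (b+1)+3 = b+4 from rfl,
            show (b+2)+2 = b+4 from by omega]
        field_simp [factne]
        simp only [fact5 (b+b), fact4 (b+b), fact3 (b+b), fact4 b, fact3 b, fact2 b]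
        push_cast
        ring
      · rcases q with _ | c
        · -- q = 0, x = a+1 = b+3
          have hW : gesselF k ((a:ℤ)+2) ((b:ℤ)+1) = 0 := gesselF_big k ((a:ℤ)+2) ((b:ℤ)+1) (by omega)
          have hE := (IH k (by omega)).2.1 a (b+1) 0 (by omega) (by omega)
          push_cast at hE
          have hNE := (IH k (by omega)).2.2.1 a b 0 (by omega) (by omega)
          push_cast at hNE
          have hSW : gesselF k ((a:ℤ)+2) ((b:ℤ)+2) = 0 := gesselF_big k ((a:ℤ)+2) ((b:ℤ)+2) (by omega)
          push_cast
          rw [rec11 k a b]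
          push_cast
          rw [hW, hE, hNE, hSW]
          have hA : (a:ℚ) = (b:ℚ) + 2 := by
            have h' : a = b + 2 := by omega
            exact_mod_cast congrArg (Nat.cast (R := ℚ)) h'
          simp only [Qu1, Qu2]
          simp only [show (b+1)+0 = b+1 from by omega, show (b+1)+3 = b+4 from rfl,
              show (b+1)+0+1 = b+2 from by omega, show (b+1)+2 = b+3 from rfl,
              show b+0 = b from by omega, Nat.factorial_zero]
          field_simp [factne]
          simp only [fact4 b, fact3 b, fact2 b, fact1 b]
          push_cast
          rw [hA]
          ring
        · -- generic x = a+1, q = c+1, a + c = b + 1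
          have hW := (IH k (by omega)).2.2.1 (a+2) (b+1) c (by omega) (by omega)
          push_cast at hW
          have hE := (IH k (by omega)).2.1 a (b+1) (c+1) (by omega) (by omega)
          push_cast at hE
          have hNE := (IH k (by omega)).2.2.1 a b (c+1) (by omega) (by omega)
          push_cast at hNE
          have hSW := (IH k (by omega)).2.1 (a+2) (b+2) c (by omega) (by omega)
          push_cast at hSW
          push_cast
          rw [rec11 k a b]
          push_cast
          rw [hW, hE, hNE, hSW]
          have hA : (a:ℚ) = (b:ℚ) + 1 - c := by
            have h' : a + c = b + 1 := by omega
            have := congrArg (Nat.cast (R := ℚ)) h'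
            push_cast at this
            linarith
          simp only [Qu1, Qu2]
          simp only [show (b+1)+(c+1)+1 = (b+c)+3 from by omega, show (b+1)+(c+1) = (b+c)+2 from by omega,
              show (b+1)+c = (b+c)+1 from by omega, show b+(c+1) = (b+c)+1 from by omega,
              show (b+2)+c+1 = (b+c)+3 from by omega, show (b+1)+3 = b+4 from rfl,
              show (b+1)+2 = b+3 from rfl, show (b+2)+2 = b+4 from by omega]
          field_simp [factne]
          simp only [fact3 (b+c), fact2 (b+c), fact1 (b+c), fact4 b, fact3 b, fact2 b, fact1 c]
          push_cast
          rw [hA]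
          ring
  · -- C3
    intro x y q r h1 h2 h3
    rcases y with _ | b
    · -- y = 0 : concrete
      obtain rfl : r = q - 1 := by omega
      have hx : x ≤ 2 := by omega
      interval_cases x
      · -- x=0, q=3, k=5
        obtain rfl : q = 3 := by omega
        obtain rfl : k = 5 := by omega
        have hr := rec00 5
        have hv1 := (IH 5 (by omega)).2.2.2 1 0 2 1 (by norm_num) (by norm_num) (by norm_num)
        norm_num [Qu3, Nat.factorial] at hv1
        have hv2 := (IH 5 (by omega)).2.2.1 1 1 2 (by norm_num) (by norm_num)
        norm_num [Qu2, Nat.factorial] at hv2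
        push_cast
        rw [hr]
        push_cast
        rw [hv1, hv2]
        norm_num [Qu3, Nat.factorial]
      · -- x=1, q=2, k=4
        obtain rfl : q = 2 := by omega
        obtain rfl : k = 4 := by omega
        have hr := rec10 4 0
        norm_num at hr
        have hv1 := (IH 4 (by omega)).2.2.2 2 0 1 0 (by norm_num) (by norm_num) (by norm_num)
        norm_num [Qu3, Nat.factorial] at hv1
        have hv2 := (IH 4 (by omega)).2.2.1 0 0 2 (by norm_num) (by norm_num)
        norm_num [Qu2, Nat.factorial] at hv2
        have hv3 := (IH 4 (by omega)).2.2.1 2 1 1 (by norm_num) (by norm_num)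
        norm_num [Qu2, Nat.factorial] at hv3
        push_cast
        rw [hr]
        push_cast
        rw [hv1, hv2, hv3]
        norm_num [Qu3, Nat.factorial]
      · -- x=2, q=1, k=3
        obtain rfl : q = 1 := by omega
        obtain rfl : k = 3 := by omega
        have hr := rec10 3 1
        norm_num at hr
        have hv1 := (IH 3 (by omega)).2.2.1 1 0 1 (by norm_num) (by norm_num)
        norm_num [Qu2, Nat.factorial] at hv1
        have hv2 := (IH 3 (by omega)).2.2.1 3 1 0 (by norm_num) (by norm_num)
        norm_num [Qu2, Nat.factorial] at hv2
        push_cast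
        rw [hr]
        push_cast
        rw [small330, hv1, hv2]
        norm_num [Qu3, Nat.factorial]
    · rcases x with _ | a
      · -- x = 0, q = b+4, r = b+b+4
        obtain rfl : q = b + 4 := by omega
        obtain rfl : r = b+b+4 := by omega
        have hW := (IH k (by omega)).2.2.2 1 (b+1) (b+3) (b+b+3) (by omega) (by omega) (by omega)
        push_cast at hW
        have hSW := (IH k (by omega)).2.2.1 1 (b+2) (b+3) (by omega) (by omega)
        push_cast at hSW
        push_cast
        rw [rec01 k b]
        push_cast
        rw [hW, hSW]
        simp only [Qu2, Qu3]
        simp only [show (b+2)+(b+3) = (b+b)+5 from by omega, show b+b+4 = (b+b)+4 from rfl,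
            show b+b+3 = (b+b)+3 from rfl, show (b+1)+4 = b+5 from rfl,
            show (b+2)+3 = b+5 from by omega]
        field_simp [factne]
        simp only [fact5 (b+b), fact4 (b+b), fact3 (b+b), fact5 b, fact4 b, fact3 b]
        push_cast
        ring
      · rcases q with _ | c
        · -- q = 0, x = a+1 = b+4, r = b
          obtain rfl : b = r := by omega
          have hW : gesselF k ((a:ℤ)+2) ((b:ℤ)+1) = 0 := gesselF_big k ((a:ℤ)+2) ((b:ℤ)+1) (by omega)
          have hE := (IH k (by omega)).2.2.1 a (b+1) 0 (by omega) (by omega)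
          push_cast at hE
          have hSW : gesselF k ((a:ℤ)+2) ((b:ℤ)+2) = 0 := gesselF_big k ((a:ℤ)+2) ((b:ℤ)+2) (by omega)
          rcases b with _ | d
          · -- y = 1 concrete : a=3, k=3
            obtain rfl : a = 3 := by omega
            obtain rfl : k = 3 := by omega
            norm_num at hW hE hSW
            norm_num [Qu2, Nat.factorial] at hE
            have hr := rec11 3 3 0
            norm_num at hr
            push_cast
            rw [hr]
            push_cast
            rw [hW, hE, hSW, small330]
            norm_num [Qu3, Nat.factorial]
          · -- y = d+2
            have hNE := (IH k (by omega)).2.2.2 a (d+1) 0 d (by omega) (by omega) (by omega)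
            push_cast at hNE
            have hr := rec11 k a (d+1)
            push_cast at hr hW hE hNE hSW ⊢
            norm_num at hr hW hE hNE hSW ⊢
            rw [hr]
            push_cast
            rw [hW, hE, hNE, hSW]
            have hA : (a:ℚ) = (d:ℚ) + 4 := by
              have h' : a = d + 4 := by omega
              exact_mod_cast congrArg (Nat.cast (R := ℚ)) h'
            simp only [Qu2, Qu3]
            simp only [show (d+1)+1+0 = d+2 from by omega, show (d+1)+1+3 = d+5 from by omega,
                show (d+1)+4 = d+5 from by omega, show (d+1)+1+4 = d+6 from by omega,
                show (d+1)+0 = d+1 from by omega, Nat.factorial_zero]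
            field_simp [factne]
            simp only [fact6 d, fact5 d, fact2 d, fact1 d]
            push_cast
            rw [hA]
            ring
        · -- generic x = a+1, q = c+1, a + c = b + 2, r = b+c+1
          obtain rfl : r = b+c+1 := by omega
          have hW := (IH k (by omega)).2.2.2 (a+2) (b+1) c (b+c) (by omega) (by omega) (by omega)
          push_cast at hW
          have hE := (IH k (by omega)).2.2.1 a (b+1) (c+1) (by omega) (by omega)
          push_cast at hE
          have hNE := (IH k (by omega)).2.2.2 a b (c+1) (b+c) (by omega) (by omega) (by omega)
          push_cast at hNE
          have hSW := (IH k (by omega)).2.2.1 (a+2) (b+2) c (by omega) (by omega)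
          push_cast at hSW
          push_cast
          rw [rec11 k a b]
          push_cast
          rw [hW, hE, hNE, hSW]
          have hA : (a:ℚ) = (b:ℚ) + 2 - c := by
            have h' : a + c = b + 2 := by omega
            have := congrArg (Nat.cast (R := ℚ)) h'
            push_cast at this
            linarith
          simp only [Qu2, Qu3]
          simp only [show b+c+1 = (b+c)+1 from rfl, show (b+1)+(c+1) = (b+c)+2 from by omega,
              show (b+2)+c = (b+c)+2 from by omega, show (b+1)+4 = b+5 from rfl,
              show (b+1)+3 = b+4 from rfl, show (b+2)+3 = b+5 from by omega]
          field_simp [factne]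
          simp only [fact2 (b+c), fact1 (b+c), fact5 b, fact4 b, fact1 c]
          push_cast
          rw [hA]
          ring

theorem gessel_C2_k3 (n : ℕ) :
    3 * n.factorial * (n + 4).factorial * gesselF (2 * n + 6) 0 (n : ℤ) =
      (2 * n + 2).factorial *
        (64 * n ^ 4 + 672 * n ^ 3 + 2648 * n ^ 2 + 4641 * n + 3060) := by
  have h := (gessel_master (2*n+6)).2.2.2 0 n (n+3) (2*n+2) (by omega) (by omega) (by omega)
  push_cast at h
  have : ((3 * n.factorial * (n + 4).factorial * gesselF (2 * n + 6) 0 (n : ℤ) : ℕ) : ℚ) =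
      (((2 * n + 2).factorial *
        (64 * n ^ 4 + 672 * n ^ 3 + 2648 * n ^ 2 + 4641 * n + 3060) : ℕ) : ℚ) := by
    push_cast
    rw [h]
    simp only [Qu3]
    field_simp [factne]
    simp only [fact4 n, fact3 n]
    push_cast
    ring
  exact_mod_cast this
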